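/- arXiv:1710.09727 — 4 statements merged into one kernel-verified Lean document; each statement's English description precedes it below -/
import Mathlib

section
/- Let b = 2·arcosh(3/2) (equivalently b = 2·log((3+√5)/2)). Then 0.1149 < e^{-λ_{[0,b]}} < 0.1150. -/
/-!
Since `e^t + e^{-t} - 2 = 2 (cosh t - 1)` and `cosh t = ∑ t^{2k}/(2k)!` has nonnegative terms, the
integrand lies between the polynomial `∑_{k<n} 2 t^{2k+1}/(2k+2)!` and that polynomial plus
`2 t^{2n+1}/(2n+2)! · cosh t`; the tail estimate comes from `(2n)! (2k)! ≤ (2n+2k)!`. On `[0, b]`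
we have `cosh t ≤ cosh b = 7/2`, and integrating with `n = 4` pins `λ_{[0,b]}` down to within
`1.4 · 10⁻⁴`. The same cosh bounds give `b/2 = arcosh (3/2) ∈ (0.9624, 0.96245)`, hence
`λ_{[0,b]} ∈ [2.163, 2.1635]`, and the bounds on `e^{-λ}` follow from the nine-digit bounds
on `e`.
-/

open MeasureTheory Real Finset Nat

namespace Real

theorem sum_range_le_cosh (n : ℕ) (t : ℝ) :
    ∑ k ∈ range n, t ^ (2 * k) / (2 * k)! ≤ cosh t :=
  sum_le_hasSum _ (fun k _ => div_nonneg ((even_two_mul k).pow_nonneg t) (by positivity))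
    (hasSum_cosh t)

theorem cosh_sub_sum_range_le (n : ℕ) (t : ℝ) :
    cosh t - ∑ k ∈ range n, t ^ (2 * k) / (2 * k)! ≤ t ^ (2 * n) / (2 * n)! * cosh t := by
  refine hasSum_le (fun k => ?_) ((hasSum_nat_add_iff' n).mpr (hasSum_cosh t))
    ((hasSum_cosh t).mul_left _)
  have hfact : ((2 * n)! * (2 * k)! : ℝ) ≤ (2 * (k + n))! := by
    rw [mul_add, add_comm (2 * k)]
    exact_mod_cast Nat.le_of_dvd (factorial_pos _) (factorial_mul_factorial_dvd_factorial_add _ _)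
  rw [← mul_div_assoc, div_mul_eq_mul_div, div_div, ← pow_add, mul_add, add_comm (2 * n),
    ← mul_add]
  exact div_le_div_of_nonneg_left ((even_two_mul _).pow_nonneg t) (by positivity) hfact

theorem cosh_le_sum_range_div (n : ℕ) {t : ℝ} (ht : t ^ (2 * n) / (2 * n)! < 1) :
    cosh t ≤ (∑ k ∈ range n, t ^ (2 * k) / (2 * k)!) / (1 - t ^ (2 * n) / (2 * n)!) := by
  rw [le_div_iff₀ (sub_pos.mpr ht)]
  linarith [cosh_sub_sum_range_le n t]

end Real

/-- The paper's `λ_{[0,b]}`. -/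
noncomputable def systoleLambda (b : ℝ) : ℝ := ∫ t in (0 : ℝ)..b, (exp t + exp (-t) - 2) / t

noncomputable def lambdaIntegrandTaylor (n : ℕ) (t : ℝ) : ℝ :=
  ∑ k ∈ range n, 2 * t ^ (2 * k + 1) / (2 * k + 2)!

noncomputable def lambdaTaylor (n : ℕ) (b : ℝ) : ℝ :=
  ∑ k ∈ range n, b ^ (2 * k + 2) / ((k + 1) * (2 * k + 2)!)

theorem mul_lambdaIntegrandTaylor (n : ℕ) (t : ℝ) :
    t * lambdaIntegrandTaylor n t = 2 * (∑ k ∈ range (n + 1), t ^ (2 * k) / (2 * k)! - 1) := by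
  rw [lambdaIntegrandTaylor, sum_range_succ', mul_sum, mul_zero, pow_zero, factorial_zero,
    cast_one, div_one, add_sub_cancel_right, mul_sum]
  refine sum_congr rfl fun k _ => ?_
  rw [show 2 * (k + 1) = 2 * k + 2 by ring]
  ring

@[fun_prop]
theorem continuous_lambdaIntegrandTaylor (n : ℕ) : Continuous (lambdaIntegrandTaylor n) := by
  unfold lambdaIntegrandTaylor
  fun_prop

theorem exp_add_exp_neg_sub_two (t : ℝ) : exp t + exp (-t) - 2 = 2 * (cosh t - 1) := by
  rw [cosh_eq]; ring

theorem integral_lambdaIntegrandTaylor (n : ℕ) (b : ℝ) :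
    ∫ t in (0 : ℝ)..b, lambdaIntegrandTaylor n t = lambdaTaylor n b := by
  unfold lambdaIntegrandTaylor lambdaTaylor
  rw [intervalIntegral.integral_finsetSum fun k _ =>
    (by fun_prop : Continuous _).intervalIntegrable _ _]
  refine sum_congr rfl fun k _ => ?_
  simp only [intervalIntegral.integral_div, intervalIntegral.integral_const_mul, integral_pow]
  push_cast
  field_simp
  ring

theorem lambdaIntegrandTaylor_le {t : ℝ} (ht : 0 ≤ t) (n : ℕ) :
    lambdaIntegrandTaylor n t ≤ (exp t + exp (-t) - 2) / t := by
  rcases ht.eq_or_lt with rfl | ht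
  · simp [lambdaIntegrandTaylor]
  rw [le_div_iff₀ ht, mul_comm, mul_lambdaIntegrandTaylor, exp_add_exp_neg_sub_two]
  linarith [sum_range_le_cosh (n + 1) t]

theorem le_lambdaIntegrandTaylor_add {t : ℝ} (ht : 0 ≤ t) (n : ℕ) :
    (exp t + exp (-t) - 2) / t ≤
      lambdaIntegrandTaylor n t + 2 * t ^ (2 * n + 1) / (2 * n + 2)! * cosh t := by
  rcases ht.eq_or_lt with rfl | ht
  · simp [lambdaIntegrandTaylor]
  rw [div_le_iff₀ ht, add_mul, mul_comm _ t, mul_lambdaIntegrandTaylor, exp_add_exp_neg_sub_two]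
  have htail : t ^ (2 * (n + 1)) / (2 * (n + 1))! = t ^ (2 * n + 1) / (2 * n + 2)! * t := by
    rw [show 2 * (n + 1) = 2 * n + 1 + 1 by ring, pow_succ]
    ring
  have h := cosh_sub_sum_range_le (n + 1) t
  rw [htail] at h
  linear_combination 2 * h

theorem intervalIntegrable_lambdaIntegrand {b : ℝ} (hb : 0 ≤ b) :
    IntervalIntegrable (fun t => (exp t + exp (-t) - 2) / t) volume 0 b := by
  refine IntervalIntegrable.mono_fun' (g := fun t => t * cosh t)
    ((by fun_prop : Continuous _).intervalIntegrable _ _)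
    (by fun_prop : Measurable fun t : ℝ => (exp t + exp (-t) - 2) / t).aestronglyMeasurable ?_
  rw [Set.uIoc_of_le hb]
  filter_upwards [ae_restrict_mem measurableSet_Ioc] with t ht
  have hnonneg : 0 ≤ (exp t + exp (-t) - 2) / t := by
    simpa [lambdaIntegrandTaylor] using lambdaIntegrandTaylor_le ht.1.le 0
  rw [norm_of_nonneg hnonneg]
  simpa [lambdaIntegrandTaylor] using le_lambdaIntegrandTaylor_add ht.1.le 0

theorem lambdaTaylor_le_systoleLambda {b : ℝ} (hb : 0 ≤ b) (n : ℕ) :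
    lambdaTaylor n b ≤ systoleLambda b := by
  rw [← integral_lambdaIntegrandTaylor]
  exact intervalIntegral.integral_mono_on hb ((by fun_prop : Continuous _).intervalIntegrable _ _)
    (intervalIntegrable_lambdaIntegrand hb) fun t ht => lambdaIntegrandTaylor_le ht.1 n

theorem systoleLambda_le {b : ℝ} (hb : 0 ≤ b) (n : ℕ) :
    systoleLambda b ≤ lambdaTaylor n b + b ^ (2 * n + 2) / ((n + 1) * (2 * n + 2)!) * cosh b := by
  have hbound : ∀ t ∈ Set.Icc 0 b, (exp t + exp (-t) - 2) / t ≤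
      lambdaIntegrandTaylor n t + 2 * t ^ (2 * n + 1) / (2 * n + 2)! * cosh b := fun t ht => by
    have hcosh : cosh t ≤ cosh b := cosh_le_cosh.mpr (abs_le_abs_of_nonneg ht.1 ht.2)
    have hcoef : 0 ≤ 2 * t ^ (2 * n + 1) / (2 * n + 2)! := by have := ht.1; positivity
    linarith [le_lambdaIntegrandTaylor_add ht.1 n, mul_le_mul_of_nonneg_left hcosh hcoef]
  calc systoleLambda b
      ≤ ∫ t in (0 : ℝ)..b,
          (lambdaIntegrandTaylor n t + 2 * t ^ (2 * n + 1) / (2 * n + 2)! * cosh b) :=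
        intervalIntegral.integral_mono_on hb (intervalIntegrable_lambdaIntegrand hb)
          ((by fun_prop : Continuous _).intervalIntegrable _ _) hbound
    _ = _ := by
      rw [intervalIntegral.integral_add ((by fun_prop : Continuous _).intervalIntegrable _ _)
        ((by fun_prop : Continuous _).intervalIntegrable _ _), integral_lambdaIntegrandTaylor,
        intervalIntegral.integral_mul_const, intervalIntegral.integral_div,
        intervalIntegral.integral_const_mul, integral_pow]
      push_cast
      field_simp
      ring

theorem lambdaTaylor_le_lambdaTaylor {a b : ℝ} (ha : 0 ≤ a) (hab : a ≤ b) (n : ℕ) :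
    lambdaTaylor n a ≤ lambdaTaylor n b :=
  sum_le_sum fun k _ => by gcongr

theorem log_three_add_sqrt_five_div_two : log ((3 + √5) / 2) = arcosh (3 / 2) := by
  have hsqrt : √((3 / 2 : ℝ) ^ 2 - 1) = √5 / 2 := by
    rw [show (3 / 2 : ℝ) ^ 2 - 1 = 5 / 2 ^ 2 by norm_num, sqrt_div' _ (by positivity),
      sqrt_sq zero_le_two]
  rw [arcosh, hsqrt]
  ring_nf

theorem cosh_two_mul_arcosh_three_halves : cosh (2 * arcosh (3 / 2)) = 7 / 2 := by
  rw [cosh_two_mul, sinh_sq, cosh_arcosh (by norm_num)]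
  norm_num

theorem arcosh_three_halves_bounds : 0.9624 < arcosh (3 / 2) ∧ arcosh (3 / 2) < 0.96245 := by
  have hlo : cosh 0.9624 < 3 / 2 := (cosh_le_sum_range_div 5 (by norm_num)).trans_lt
    (by norm_num [sum_range_succ, factorial])
  have hhi : 3 / 2 < cosh 0.96245 := lt_of_lt_of_le
    (by norm_num [sum_range_succ, factorial]) (sum_range_le_cosh 5 _)
  rw [← cosh_arcosh (x := 3 / 2) (by norm_num), cosh_lt_cosh] at hlo hhi
  rw [abs_of_nonneg (arcosh_nonneg (by norm_num)), abs_of_pos (by norm_num)] at hlo hhi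
  exact ⟨hlo, hhi⟩

theorem lt_exp_neg_of_le {x : ℝ} (hx : x ≤ 2.1635) : 0.1149 < exp (-x) := by
  have hsmall := exp_bound' (x := 0.1635) (by norm_num) (by norm_num) (n := 4) (by norm_num)
  have hexp : exp 2.1635 < 10000 / 1149 := calc
    exp 2.1635 = exp 1 * exp 1 * exp 0.1635 := by rw [← exp_add, ← exp_add]; norm_num
    _ ≤ 2.7182818286 * 2.7182818286 *
        (∑ m ∈ range 4, (0.1635 : ℝ) ^ m / m ! +
          0.1635 ^ 4 * ((4 : ℕ) + 1) / ((4 : ℕ)! * (4 : ℕ))) := by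
      gcongr <;> exact exp_one_lt_d9.le
    _ < 10000 / 1149 := by norm_num [sum_range_succ, factorial]
  calc (0.1149 : ℝ) < (exp 2.1635)⁻¹ := by
        rw [lt_inv_comm₀ (by norm_num) (exp_pos _)]; norm_num at hexp ⊢; linarith
    _ = exp (-2.1635) := (exp_neg _).symm
    _ ≤ exp (-x) := exp_le_exp.mpr (by linarith)

theorem exp_neg_lt_of_le {x : ℝ} (hx : 2.163 ≤ x) : exp (-x) < 0.1150 := by
  have hsmall := sum_le_exp_of_nonneg (x := 0.163) (by norm_num) 4
  have hexp : 200 / 23 < exp 2.163 := calc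
    (200 / 23 : ℝ)
        < 2.7182818283 * 2.7182818283 * ∑ m ∈ range 4, (0.163 : ℝ) ^ m / m ! := by
      norm_num [sum_range_succ, factorial]
    _ ≤ exp 1 * exp 1 * exp 0.163 := by gcongr <;> exact exp_one_gt_d9.le
    _ = exp 2.163 := by rw [← exp_add, ← exp_add]; norm_num
  calc exp (-x) ≤ exp (-2.163) := exp_le_exp.mpr (by linarith)
    _ = (exp 2.163)⁻¹ := exp_neg _
    _ < 0.1150 := by
        rw [inv_lt_comm₀ (exp_pos _) (by norm_num)]; norm_num at hexp ⊢; linarith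

theorem systoleLambda_two_mul_arcosh_bounds :
    2.163 ≤ systoleLambda (2 * arcosh (3 / 2)) ∧
      systoleLambda (2 * arcosh (3 / 2)) ≤ 2.1635 := by
  obtain ⟨hlo, hhi⟩ := arcosh_three_halves_bounds
  have hb_lo : 1.9248 ≤ 2 * arcosh (3 / 2) := by linarith
  have hb_hi : 2 * arcosh (3 / 2) ≤ 1.9249 := by linarith
  have hb : 0 ≤ 2 * arcosh (3 / 2) := by linarith
  constructor
  · calc (2.163 : ℝ) ≤ lambdaTaylor 4 1.9248 := by
          norm_num [lambdaTaylor, sum_range_succ, factorial]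
      _ ≤ lambdaTaylor 4 (2 * arcosh (3 / 2)) :=
          lambdaTaylor_le_lambdaTaylor (by norm_num) hb_lo 4
      _ ≤ _ := lambdaTaylor_le_systoleLambda hb 4
  · refine (systoleLambda_le hb 4).trans ?_
    rw [cosh_two_mul_arcosh_three_halves]
    calc _ ≤ lambdaTaylor 4 1.9249 +
          1.9249 ^ (2 * 4 + 2) / (((4 : ℕ) + 1) * (2 * 4 + 2)!) * (7 / 2) := by
          gcongr
          exact lambdaTaylor_le_lambdaTaylor hb hb_hi 4
      _ ≤ 2.1635 := by norm_num [lambdaTaylor, sum_range_succ, factorial]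

/-- With `b = 2·arcosh(3/2) = 2·log((3+√5)/2)`, we have `0.1149 < e^{-λ_{[0,b]}} < 0.1150`. -/
theorem thick_part_probability_bounds :
    0.1149 < Real.exp (-(∫ t in (0:ℝ)..(2 * Real.log ((3 + Real.sqrt 5) / 2)),
        (Real.exp t + Real.exp (-t) - 2) / t)) ∧
    Real.exp (-(∫ t in (0:ℝ)..(2 * Real.log ((3 + Real.sqrt 5) / 2)),
        (Real.exp t + Real.exp (-t) - 2) / t)) < 0.1150 := by
  obtain ⟨hlo, hhi⟩ := systoleLambda_two_mul_arcosh_bounds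
  rw [log_three_add_sqrt_five_div_two]
  exact ⟨lt_exp_neg_of_le hhi, exp_neg_lt_of_le hlo⟩
end

section
/- (Method of moments for Poisson approximation.) Let k ∈ ℕ, let λ₁, …, λ_k ∈ (0, ∞), and for each i ∈ ℕ let (Ω_i, P_i) be a probability space carrying measurable random variables X_{1,i}, …, X_{k,i} : Ω_i → ℕ. Assume that for all n₁, …, n_k ∈ ℕ the product (X_{1,i})_{n₁}·(X_{2,i})_{n₂}⋯(X_{k,i})_{n_k} is integrable with respect to P_i, and that its expectation E_i[(X_{1,i})_{n₁}⋯(X_{k,i})_{n_k}] converges to λ₁^{n₁}·λ₂^{n₂}⋯λ_k^{n_k} as i → ∞. Then for all m₁, …, m_k ∈ ℕ, the probability P_i[X_{1,i} = m₁, …, X_{k,i} = m_k] converges to ∏_{j=1}^k λ_j^{m_j} e^{-λ_j} / m_j! as i → ∞. -/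
/-!
For `x m : ℕ` one has `1[x = m] = ∑ r, (-1) ^ r * (x)_{m+r} / (m! * r!)`, since the right side is
`(x choose m) * ∑ r, (-1) ^ r * (x - m choose r)`, and by the Bonferroni inequalities the
truncation after `K` terms is off by at most `(x)_{m+K} / (m! * K!)`. Multiplying over the
coordinates, `P_i[X_i = m]` differs from a finite combination of joint factorial moments by at
most `E_i[∏ j, (1 + (X_{j,i})_{m_j+K} / (m_j! * K!))] - 1`, itself such a combination. As
`i → ∞` the factorial moments become powers of `λ`, so the approximation tends to a partial sum
of `∏ j, λ_j ^ m_j * exp (-λ_j) / m_j!` and the error bound to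
`∏ j, (1 + λ_j ^ (m_j + K) / (m_j! * K!)) - 1`; letting `K → ∞` finishes the proof.
-/

open MeasureTheory Filter Finset Nat Topology

theorem abs_prod_sub_prod_le {ι : Type*} (s : Finset ι) {a b d : ι → ℝ}
    (hb : ∀ j ∈ s, |b j| ≤ 1) (hab : ∀ j ∈ s, |a j - b j| ≤ d j) :
    |∏ j ∈ s, a j - ∏ j ∈ s, b j| ≤ ∏ j ∈ s, (1 + d j) - 1 := by
  classical
  induction s using Finset.induction_on with
  | empty => simp
  | insert i s hi ih =>
    rw [prod_insert hi, prod_insert hi, prod_insert hi]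
    have ih := ih (fun j hj => hb j (mem_insert_of_mem hj))
      (fun j hj => hab j (mem_insert_of_mem hj))
    have habi := hab i (mem_insert_self i s)
    have hai : |a i| ≤ 1 + d i := by
      linarith [abs_sub_abs_le_abs_sub (a i) (b i), hb i (mem_insert_self i s)]
    have hprod : |∏ j ∈ s, b j| ≤ 1 := by
      rw [abs_prod]
      exact prod_le_one (fun j _ => abs_nonneg _) fun j hj => hb j (mem_insert_of_mem hj)
    calc |a i * ∏ j ∈ s, a j - b i * ∏ j ∈ s, b j|
        = |a i * (∏ j ∈ s, a j - ∏ j ∈ s, b j) + (a i - b i) * ∏ j ∈ s, b j| := by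
          congr 1; ring
      _ ≤ |a i| * |∏ j ∈ s, a j - ∏ j ∈ s, b j| + |a i - b i| * |∏ j ∈ s, b j| := by
        rw [← abs_mul, ← abs_mul]; exact abs_add_le _ _
      _ ≤ (1 + d i) * (∏ j ∈ s, (1 + d j) - 1) + d i * 1 :=
        add_le_add (mul_le_mul hai ih (abs_nonneg _) ((abs_nonneg _).trans hai))
          (mul_le_mul habi hprod (abs_nonneg _) ((abs_nonneg _).trans habi))
      _ = (1 + d i) * ∏ j ∈ s, (1 + d j) - 1 := by ring

theorem abs_measureReal_sub_integral_le {Ω : Type*} [MeasurableSpace Ω] {μ : Measure Ω}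
    [IsFiniteMeasure μ] {s : Set Ω} (hs : MeasurableSet s) {g h : Ω → ℝ} (hg : Integrable g μ)
    (hh : Integrable h μ) (hgh : ∀ ω, |s.indicator 1 ω - g ω| ≤ h ω) :
    |μ.real s - ∫ ω, g ω ∂μ| ≤ ∫ ω, h ω ∂μ := by
  have hind : Integrable (s.indicator (1 : Ω → ℝ)) μ := (integrable_const 1).indicator hs
  rw [← integral_indicator_one hs, ← integral_sub hind hg]
  exact abs_integral_le_integral_abs.trans (integral_mono (hind.sub hg).abs hh hgh)

theorem tendsto_of_abs_sub_le {α β : Type*} {l : Filter α} {l' : Filter β} [l'.NeBot]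
    {a : α → ℝ} {G H : β → α → ℝ} {T e : β → ℝ} {L : ℝ}
    (haG : ∀ K i, |a i - G K i| ≤ H K i) (hG : ∀ K, Tendsto (G K) l (𝓝 (T K)))
    (hH : ∀ K, Tendsto (H K) l (𝓝 (e K))) (hT : Tendsto T l' (𝓝 L)) (he : Tendsto e l' (𝓝 0)) :
    Tendsto a l (𝓝 L) := by
  rw [Metric.tendsto_nhds]
  intro ε hε
  obtain ⟨K, hTK, heK⟩ := ((Metric.tendsto_nhds.1 hT (ε / 4) (by positivity)).and
    (Metric.tendsto_nhds.1 he (ε / 4) (by positivity))).exists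
  filter_upwards [Metric.tendsto_nhds.1 (hG K) (ε / 4) (by positivity),
    Metric.tendsto_nhds.1 (hH K) (ε / 4) (by positivity)] with i hGi hHi
  rw [Real.dist_eq] at hTK heK hGi hHi ⊢
  linarith [haG K i, abs_sub_lt_iff.1 hGi, abs_sub_lt_iff.1 hHi, abs_sub_lt_iff.1 hTK,
    abs_sub_lt_iff.1 heK, abs_sub_le (a i) (G K i) (T K), abs_sub_le (a i) (T K) L]

section FactorialMoments

variable {κ ι : Type*} [Fintype κ] {Ω : ℕ → Type*} [∀ i, MeasurableSpace (Ω i)]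
  {P : ∀ i, Measure (Ω i)} {X : ∀ i, κ → Ω i → ℕ} {lam : κ → ℝ}

theorem integrable_prod_sum_descFactorial
    (hint : ∀ (i : ℕ) (n : κ → ℕ),
      Integrable (fun ω => ∏ j, ((X i j ω).descFactorial (n j) : ℝ)) (P i))
    (t : κ → Finset ι) (c : κ → ι → ℝ) (e : κ → ι → ℕ) (i : ℕ) :
    Integrable (fun ω => ∏ j, ∑ r ∈ t j, c j r * ((X i j ω).descFactorial (e j r) : ℝ)) (P i) := by
  classical
  simp_rw [prod_univ_sum, prod_mul_distrib]
  exact integrable_finsetSum _ fun r _ => (hint i _).const_mul _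

theorem tendsto_integral_prod_sum_descFactorial
    (hint : ∀ (i : ℕ) (n : κ → ℕ),
      Integrable (fun ω => ∏ j, ((X i j ω).descFactorial (n j) : ℝ)) (P i))
    (hmom : ∀ n : κ → ℕ,
      Tendsto (fun i => ∫ ω, (∏ j, ((X i j ω).descFactorial (n j) : ℝ)) ∂(P i))
        atTop (𝓝 (∏ j, lam j ^ n j)))
    (t : κ → Finset ι) (c : κ → ι → ℝ) (e : κ → ι → ℕ) :
    Tendsto (fun i => ∫ ω, ∏ j, ∑ r ∈ t j, c j r * ((X i j ω).descFactorial (e j r) : ℝ) ∂(P i))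
      atTop (𝓝 (∏ j, ∑ r ∈ t j, c j r * lam j ^ e j r)) := by
  classical
  simp_rw [prod_univ_sum, prod_mul_distrib]
  refine (tendsto_finsetSum _ fun r _ => (hmom _).const_mul _).congr fun i => ?_
  rw [integral_finsetSum _ fun r _ => (hint i _).const_mul _]
  exact sum_congr rfl fun r _ => (integral_const_mul _ _).symm

-- `1 + x.descFactorial M / D` is `∑ r ∈ range 2, D⁻¹ ^ r * x.descFactorial (r * M)`.
theorem integrable_prod_one_add_descFactorial_div
    (hint : ∀ (i : ℕ) (n : κ → ℕ),
      Integrable (fun ω => ∏ j, ((X i j ω).descFactorial (n j) : ℝ)) (P i))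
    (M : κ → ℕ) (D : κ → ℝ) (i : ℕ) :
    Integrable (fun ω => ∏ j, (1 + ((X i j ω).descFactorial (M j) : ℝ) / D j)) (P i) := by
  simpa [sum_range_succ, div_eq_mul_inv, mul_comm] using
    integrable_prod_sum_descFactorial hint (fun _ => range 2) (fun j r => (D j)⁻¹ ^ r)
      (fun j r => r * M j) i

theorem tendsto_integral_prod_one_add_descFactorial_div
    (hint : ∀ (i : ℕ) (n : κ → ℕ),
      Integrable (fun ω => ∏ j, ((X i j ω).descFactorial (n j) : ℝ)) (P i))
    (hmom : ∀ n : κ → ℕ,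
      Tendsto (fun i => ∫ ω, (∏ j, ((X i j ω).descFactorial (n j) : ℝ)) ∂(P i))
        atTop (𝓝 (∏ j, lam j ^ n j)))
    (M : κ → ℕ) (D : κ → ℝ) :
    Tendsto (fun i => ∫ ω, ∏ j, (1 + ((X i j ω).descFactorial (M j) : ℝ) / D j) ∂(P i))
      atTop (𝓝 (∏ j, (1 + lam j ^ M j / D j))) := by
  simpa [sum_range_succ, div_eq_mul_inv, mul_comm] using
    tendsto_integral_prod_sum_descFactorial hint hmom (fun _ => range 2)
      (fun j r => (D j)⁻¹ ^ r) (fun j r => r * M j)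

end FactorialMoments

theorem abs_alternating_sum_range_choose_sub_le (n K : ℕ) :
    |∑ r ∈ range K, (-1 : ℝ) ^ r * n.choose r - if n = 0 then 1 else 0| ≤ n.choose K := by
  rcases n with _ | n <;> rcases K with _ | K
  · simp
  · simp [sum_range_succ']
  · simp
  · have h := congrArg (Int.cast : ℤ → ℝ)
      (Int.alternating_sum_range_choose_eq_choose (n := n) (m := K))
    push_cast at h
    rw [h, if_neg n.succ_ne_zero, sub_zero, abs_mul, abs_pow, abs_neg, abs_one, one_pow, one_mul,
      Nat.abs_cast, Nat.choose_succ_succ, Nat.cast_add]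
    exact le_add_of_nonneg_right (Nat.cast_nonneg _)

theorem Nat.descFactorial_add_eq_mul_choose (x m r : ℕ) :
    x.descFactorial (m + r) = m ! * x.choose m * (r ! * (x - m).choose r) := by
  rw [← Nat.descFactorial_mul_descFactorial (Nat.le_add_right m r), Nat.add_sub_cancel_left,
    Nat.descFactorial_eq_factorial_mul_choose, Nat.descFactorial_eq_factorial_mul_choose, mul_comm]

noncomputable def indicatorApprox (m K x : ℕ) : ℝ :=
  ∑ r ∈ range K, (-1) ^ r / (m ! * r !) * (x.descFactorial (m + r) : ℝ)

theorem indicatorApprox_eq (m K x : ℕ) :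
    indicatorApprox m K x = x.choose m * ∑ r ∈ range K, (-1 : ℝ) ^ r * (x - m).choose r := by
  rw [indicatorApprox, mul_sum]
  refine sum_congr rfl fun r _ => ?_
  rw [descFactorial_add_eq_mul_choose]
  push_cast
  field_simp

theorem abs_indicatorApprox_sub_le (m K x : ℕ) :
    |indicatorApprox m K x - if x = m then 1 else 0|
      ≤ (x.descFactorial (m + K) : ℝ) / (m ! * K !) := by
  have hind : (if x = m then 1 else 0 : ℝ) = x.choose m * if x - m = 0 then 1 else 0 := by
    rcases lt_trichotomy x m with h | rfl | h
    · simp [Nat.choose_eq_zero_of_lt h, h.ne]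
    · simp
    · simp [h.ne', Nat.sub_ne_zero_of_lt h]
  rw [indicatorApprox_eq, hind, ← mul_sub, abs_mul, Nat.abs_cast, descFactorial_add_eq_mul_choose]
  push_cast
  rw [show (m ! * x.choose m * (K ! * (x - m).choose K) : ℝ) / (m ! * K !)
      = x.choose m * (x - m).choose K by field_simp]
  exact mul_le_mul_of_nonneg_left (abs_alternating_sum_range_choose_sub_le _ _)
    (Nat.cast_nonneg _)

theorem Real.tendsto_sum_range_pow_div_factorial (l : ℝ) :
    Tendsto (fun K => ∑ r ∈ range K, l ^ r / r !) atTop (𝓝 (Real.exp l)) := by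
  simpa [Real.exp_eq_exp_ℝ] using (NormedSpace.expSeries_div_hasSum_exp l).tendsto_sum_nat

theorem tendsto_sum_range_neg_one_pow_div_mul_pow_add (m : ℕ) (l : ℝ) :
    Tendsto (fun K => ∑ r ∈ range K, (-1) ^ r / (m ! * r !) * l ^ (m + r)) atTop
      (𝓝 (l ^ m * Real.exp (-l) / m !)) := by
  have h := (Real.tendsto_sum_range_pow_div_factorial (-l)).const_mul (l ^ m / m !)
  rw [mul_div_right_comm]
  refine h.congr fun K => ?_
  rw [mul_sum]
  refine sum_congr rfl fun r _ => ?_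
  rw [neg_pow, pow_add]
  field_simp

theorem tendsto_pow_add_div_factorial_mul_factorial (m : ℕ) (l : ℝ) :
    Tendsto (fun K => l ^ (m + K) / (m ! * K !)) atTop (𝓝 0) := by
  have h := (FloorSemiring.tendsto_pow_div_factorial_atTop l).const_mul (l ^ m / m !)
  rw [mul_zero] at h
  refine h.congr fun K => ?_
  rw [pow_add]
  field_simp

theorem abs_indicator_sub_prod_indicatorApprox_le {κ : Type*} [Fintype κ] (m : κ → ℕ) (K : ℕ)
    (x : κ → ℕ) :
    |{y | ∀ j, y j = m j}.indicator 1 x - ∏ j, indicatorApprox (m j) K (x j)|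
      ≤ ∏ j, (1 + ((x j).descFactorial (m j + K) : ℝ) / ((m j)! * K !)) - 1 := by
  classical
  have hind : {y | ∀ j, y j = m j}.indicator 1 x = ∏ j, if x j = m j then (1 : ℝ) else 0 := by
    simp [Set.indicator_apply, Fintype.prod_boole]
  rw [hind, abs_sub_comm]
  exact abs_prod_sub_prod_le _ (fun j _ => by split_ifs <;> simp)
    fun j _ => abs_indicatorApprox_sub_le _ _ _

theorem method_of_moments_poisson_general
    {k : ℕ} (lam : Fin k → ℝ)
    {Ω : ℕ → Type*} [∀ i, MeasurableSpace (Ω i)]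
    (P : ∀ i, Measure (Ω i)) [∀ i, IsProbabilityMeasure (P i)]
    (X : ∀ i, Fin k → Ω i → ℕ) (hX : ∀ i j, Measurable (X i j))
    (hint : ∀ (i : ℕ) (n : Fin k → ℕ),
      Integrable (fun ω => ∏ j, ((X i j ω).descFactorial (n j) : ℝ)) (P i))
    (hmom : ∀ n : Fin k → ℕ,
      Tendsto (fun i => ∫ ω, (∏ j, ((X i j ω).descFactorial (n j) : ℝ)) ∂(P i))
        atTop (nhds (∏ j, lam j ^ n j))) :
    ∀ m : Fin k → ℕ,
      Tendsto (fun i => ((P i) {ω | ∀ j, X i j ω = m j}).toReal)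
        atTop (nhds (∏ j, lam j ^ m j * Real.exp (-lam j) / (m j).factorial)) := by
  intro m
  refine tendsto_of_abs_sub_le (l' := atTop)
    (G := fun K i => ∫ ω, ∏ j, indicatorApprox (m j) K (X i j ω) ∂P i)
    (H := fun K i =>
      ∫ ω, ∏ j, (1 + ((X i j ω).descFactorial (m j + K) : ℝ) / ((m j)! * K !)) ∂P i - 1)
    (fun K i => ?_) (fun K => tendsto_integral_prod_sum_descFactorial hint hmom _ _ _)
    (fun K => (tendsto_integral_prod_one_add_descFactorial_div hint hmom _ _).sub_const 1)
    (tendsto_finsetProd _ fun j _ => tendsto_sum_range_neg_one_pow_div_mul_pow_add (m j) (lam j)) ?_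
  · have hmeas : MeasurableSet {ω | ∀ j, X i j ω = m j} := by
      simp only [Set.ofPred_forall]
      exact .iInter fun j => hX i j (measurableSet_singleton _)
    have h := abs_measureReal_sub_integral_le hmeas
      (integrable_prod_sum_descFactorial hint _ _ _ i)
      ((integrable_prod_one_add_descFactorial_div hint _ _ i).sub (integrable_const 1))
      fun ω => abs_indicator_sub_prod_indicatorApprox_le m K (X i · ω)
    rwa [integral_sub' (integrable_prod_one_add_descFactorial_div hint _ _ i) (integrable_const 1),
      integral_const, probReal_univ, one_smul] at h
  · simpa using (tendsto_finsetProd univ fun j _ =>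
      (tendsto_pow_add_div_factorial_mul_factorial (m j) (lam j)).const_add 1).sub_const 1

/-- **The method of moments for Poisson approximation.**
If the joint factorial moments of the `ℕ`-valued random variables `X i 1, …, X i k`
converge to `λ₁^{n₁}⋯λ_k^{n_k}` for all `n₁,…,n_k`, then the vector converges jointly in
distribution to a vector of independent Poisson random variables with means `λ₁,…,λ_k`. -/
theorem method_of_moments_poisson
    {k : ℕ} (lam : Fin k → ℝ) (hlam : ∀ j, 0 < lam j)
    {Ω : ℕ → Type*} [∀ i, MeasurableSpace (Ω i)]
    (P : ∀ i, Measure (Ω i)) [∀ i, IsProbabilityMeasure (P i)]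
    (X : ∀ i, Fin k → Ω i → ℕ) (hX : ∀ i j, Measurable (X i j))
    (hint : ∀ (i : ℕ) (n : Fin k → ℕ),
      Integrable (fun ω => ∏ j, ((X i j ω).descFactorial (n j) : ℝ)) (P i))
    (hmom : ∀ n : Fin k → ℕ,
      Tendsto (fun i => ∫ ω, (∏ j, ((X i j ω).descFactorial (n j) : ℝ)) ∂(P i))
        atTop (nhds (∏ j, lam j ^ n j))) :
    ∀ m : Fin k → ℕ,
      Tendsto (fun i => ((P i) {ω | ∀ j, X i j ω = m j}).toReal)
        atTop (nhds (∏ j, lam j ^ m j * Real.exp (-lam j) / (m j).factorial)) :=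
  method_of_moments_poisson_general lam P X hX hint hmom
end

section
/- Let λ ∈ (0, ∞) and let p : ℕ → ℝ be a probability mass function on ℕ (so p(k) ≥ 0 for all k and ∑_{k=0}^∞ p(k) = 1). Then the following are equivalent: (i) p(k) = λ^k e^{-λ}/k! for all k ∈ ℕ; (ii) for every n ∈ ℕ the series ∑_{k=0}^∞ (k)_n · p(k) converges with sum λ^n. In other words, an ℕ-valued random variable is Poisson distributed with mean λ if and only if its n-th factorial moment equals λ^n for all n ∈ ℕ. -/
/-!
If `p` is Poisson, shifting the summation index by `n` turns the `n`-th factorial moment into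
`λ^n` times the total mass of `p`. Conversely, the factorial moments determine the binomial moments
`b m = ∑ₖ C(k, m) p k = λ^m / m!`, and the binomial moments determine `p` through the inversion
`p j = ∑ₙ (-1)^n C(n + j, j) b (n + j)`, which rests on
`∑ₙ (-1)^n C(n + j, j) C(k, n + j) = δ_{kj}`.
Interchanging the two summations is legitimate because `p ≥ 0` and `∑ₘ 2^m b m < ∞`, which
dominates the double series since `C(n + j, j) ≤ 2^(n + j)`. For `b m = λ^m / m!` the inversion
formula sums to `λ^j e^{-λ} / j!`.
-/

open Finset
open scoped Nat

lemma Real.hasSum_pow_div_factorial (x : ℝ) : HasSum (fun n : ℕ => x ^ n / n !) (Real.exp x) := by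
  rw [Real.exp_eq_exp_ℝ]
  exact NormedSpace.expSeries_div_hasSum_exp x

lemma hasSum_descFactorial_mul_poisson (lam : ℝ) (n : ℕ) :
    HasSum (fun k : ℕ => (k.descFactorial n : ℝ) * (lam ^ k * Real.exp (-lam) / k !))
      (lam ^ n) := by
  set f : ℕ → ℝ := fun k => (k.descFactorial n : ℝ) * (lam ^ k * Real.exp (-lam) / k !)
  have hshift : (fun k => f (k + n)) = fun k => lam ^ n * (lam ^ k / k ! * Real.exp (-lam)) := by
    funext k
    have hfac := Nat.factorial_mul_descFactorial (Nat.le_add_left n k)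
    rw [Nat.add_sub_cancel] at hfac
    simp only [f, ← hfac, Nat.cast_mul, pow_add]
    field_simp
  have hhead : ∑ k ∈ range n, f k = 0 :=
    sum_eq_zero fun k hk => by simp [f, Nat.descFactorial_eq_zero_iff_lt.2 (mem_range.1 hk)]
  have hmass : HasSum (fun k : ℕ => lam ^ k / k ! * Real.exp (-lam)) 1 := by
    simpa [← Real.exp_add] using (Real.hasSum_pow_div_factorial lam).mul_right (Real.exp (-lam))
  have := (hasSum_nat_add_iff n).1 (hshift ▸ hmass.mul_left (lam ^ n))
  rwa [hhead, mul_one, add_zero] at this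

lemma hasSum_neg_one_pow_mul_choose (m : ℕ) :
    HasSum (fun n : ℕ => (-1 : ℝ) ^ n * m.choose n) (if m = 0 then 1 else 0) := by
  have hsum := congrArg (Int.cast : ℤ → ℝ) (Int.alternating_sum_range_choose (n := m))
  push_cast at hsum
  rw [← hsum]
  refine hasSum_sum_of_ne_finset_zero fun n hn => ?_
  rw [Nat.choose_eq_zero_of_lt (by simpa using hn), Nat.cast_zero, mul_zero]

lemma hasSum_neg_one_pow_mul_choose_mul_choose (j k : ℕ) :
    HasSum (fun n : ℕ => (-1 : ℝ) ^ n * (n + j).choose j * k.choose (n + j))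
      (if k = j then 1 else 0) := by
  rcases lt_or_ge k j with hkj | hjk
  · have hzero : ∀ n, k.choose (n + j) = 0 := fun n => Nat.choose_eq_zero_of_lt (by omega)
    simp [hzero, hkj.ne]
  obtain ⟨m, rfl⟩ := Nat.exists_eq_add_of_le hjk
  have hterm : ∀ n : ℕ, (-1 : ℝ) ^ n * (n + j).choose j * (j + m).choose (n + j)
      = (j + m).choose j * ((-1 : ℝ) ^ n * m.choose n) := fun n => by
    rw [mul_assoc, ← Nat.cast_mul, mul_comm ((n + j).choose j),
      Nat.choose_mul (Nat.le_add_left j n), Nat.add_sub_cancel_left, Nat.add_sub_cancel, Nat.cast_mul]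
    ring
  have hval : (if j + m = j then (1 : ℝ) else 0) = (j + m).choose j * (if m = 0 then 1 else 0) := by
    by_cases hm : m = 0 <;> simp [hm]
  rw [funext hterm, hval]
  exact (hasSum_neg_one_pow_mul_choose m).mul_left _

lemma hasSum_choose_mul_of_hasSum_descFactorial_mul {p : ℕ → ℝ} {m : ℕ} {a : ℝ}
    (h : HasSum (fun k : ℕ => (k.descFactorial m : ℝ) * p k) a) :
    HasSum (fun k : ℕ => (k.choose m : ℝ) * p k) (a / m !) := by
  have hterm : ∀ k : ℕ, (k.descFactorial m : ℝ) * p k / m ! = k.choose m * p k := fun k => by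
    rw [Nat.descFactorial_eq_factorial_mul_choose, Nat.cast_mul]
    field_simp
  simpa only [hterm] using h.div_const (m ! : ℝ)

theorem hasSum_binomialMoment_inversion {p b : ℕ → ℝ} (hp : ∀ k, 0 ≤ p k)
    (hb : ∀ m, HasSum (fun k : ℕ => (k.choose m : ℝ) * p k) (b m))
    (h2b : Summable fun m : ℕ => 2 ^ m * b m) (j : ℕ) :
    HasSum (fun n : ℕ => (-1 : ℝ) ^ n * (n + j).choose j * b (n + j)) (p j) := by
  set F : ℕ × ℕ → ℝ := fun q => (-1 : ℝ) ^ q.1 * (q.1 + j).choose j * (q.2.choose (q.1 + j) * p q.2)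
  have hrow : ∀ n, HasSum (fun k => F (n, k)) ((-1 : ℝ) ^ n * (n + j).choose j * b (n + j)) :=
    fun n => (hb (n + j)).mul_left _
  have hcol : ∀ k, HasSum (fun n => F (n, k)) (if k = j then p j else 0) := fun k => by
    have := (hasSum_neg_one_pow_mul_choose_mul_choose j k).mul_right (p k)
    obtain rfl | hkj := eq_or_ne k j <;> simpa [F, mul_assoc, *] using this
  have hdomRow : ∀ n, HasSum (fun k => 2 ^ (n + j) * (k.choose (n + j) * p k))
      (2 ^ (n + j) * b (n + j)) := fun n => (hb (n + j)).mul_left (2 ^ (n + j))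
  have hdom : Summable fun q : ℕ × ℕ => 2 ^ (q.1 + j) * (q.2.choose (q.1 + j) * p q.2) := by
    refine (summable_prod_of_nonneg fun q =>
      mul_nonneg (by positivity) (mul_nonneg (Nat.cast_nonneg _) (hp _))).2
      ⟨fun n => (hdomRow n).summable, ?_⟩
    simpa only [(hdomRow _).tsum_eq] using (summable_nat_add_iff j).2 h2b
  have hF : Summable F := by
    refine hdom.of_norm_bounded fun q => ?_
    have hC : ((q.1 + j).choose j : ℝ) ≤ 2 ^ (q.1 + j) := by
      exact_mod_cast Nat.choose_le_two_pow _ _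
    simp only [F, norm_mul, norm_pow, norm_neg, norm_one, one_pow, one_mul, Real.norm_natCast,
      Real.norm_of_nonneg (hp q.2)]
    gcongr
    exact mul_nonneg (Nat.cast_nonneg _) (hp _)
  have hpj : HasSum F (p j) := by
    have hsum := hF.hasSum
    have hcolSum := ((Equiv.prodComm ℕ ℕ).hasSum_iff.2 hsum).prod_fiberwise hcol
    rwa [hcolSum.unique (hasSum_ite_eq j (p j))] at hsum
  exact hpj.prod_fiberwise hrow

lemma hasSum_neg_one_pow_mul_choose_mul_pow_div_factorial (lam : ℝ) (j : ℕ) :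
    HasSum (fun n : ℕ => (-1 : ℝ) ^ n * (n + j).choose j * (lam ^ (n + j) / (n + j)!))
      (lam ^ j * Real.exp (-lam) / j !) := by
  have hterm : ∀ n : ℕ, (-1 : ℝ) ^ n * (n + j).choose j * (lam ^ (n + j) / (n + j)!)
      = lam ^ j / j ! * ((-lam) ^ n / n !) := fun n => by
    have hC : ((n + j).choose j : ℝ) ≠ 0 :=
      Nat.cast_ne_zero.2 (Nat.choose_pos (Nat.le_add_left j n)).ne'
    rw [← Nat.add_choose_mul_factorial_mul_factorial, neg_pow lam, pow_add]
    push_cast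
    field_simp
  rw [funext hterm, mul_div_right_comm]
  exact (Real.hasSum_pow_div_factorial (-lam)).mul_left _

theorem poisson_iff_factorial_moments_general (lam : ℝ)
    (p : ℕ → ℝ) (hp : ∀ k, 0 ≤ p k) :
    (∀ k : ℕ, p k = lam ^ k * Real.exp (-lam) / k.factorial) ↔
    (∀ n : ℕ, HasSum (fun k : ℕ => (k.descFactorial n : ℝ) * p k) (lam ^ n)) := by
  refine ⟨fun hpois n => ?_, fun hmom j => ?_⟩
  · simpa only [← hpois] using hasSum_descFactorial_mul_poisson lam n
  have hb : ∀ m, HasSum (fun k : ℕ => (k.choose m : ℝ) * p k) (lam ^ m / m !) :=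
    fun m => hasSum_choose_mul_of_hasSum_descFactorial_mul (hmom m)
  have h2b : Summable fun m : ℕ => 2 ^ m * (lam ^ m / m !) := by
    simpa only [mul_pow, mul_div_assoc] using (Real.hasSum_pow_div_factorial (2 * lam)).summable
  exact (hasSum_binomialMoment_inversion hp hb h2b j).unique
    (hasSum_neg_one_pow_mul_choose_mul_pow_div_factorial lam j)

/-- An `ℕ`-valued random variable is Poisson distributed with mean `λ` if and only if its
`n`-th factorial moment equals `λ^n` for all `n`. -/
theorem poisson_iff_factorial_moments (lam : ℝ) (hlam : 0 < lam)
    (p : ℕ → ℝ) (hp : ∀ k, 0 ≤ p k) (hsum : HasSum p 1) :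
    (∀ k : ℕ, p k = lam ^ k * Real.exp (-lam) / k.factorial) ↔
    (∀ n : ℕ, HasSum (fun k : ℕ => (k.descFactorial n : ℝ) * p k) (lam ^ n)) :=
  poisson_iff_factorial_moments_general lam p hp
end

section
/- Let q ≥ 1 and K be natural numbers and let n₁, …, n_q ∈ ℕ \ {0} satisfy ∑_{i=1}^q n_i = 2K. Then there exists a constant C > 0 such that for every natural number g ≥ K + 2, the sum over all tuples (g₁, …, g_q) ∈ ℕ^q with ∑_{i=1}^q g_i = g + q - K - 1 and 2g_i - 3 + n_i ≥ 0 for all i = 1, …, q of the products ∏_{i=1}^q (2g_i - 3 + n_i)^{(2g_i - 3 + n_i)} is at most C · (2g - 3)^{(2g-3)} / g^{q-1}. Here the convention 0^0 = 1 is used. -/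
/-!
Substituting `mᵢ = 2gᵢ + nᵢ - 3` turns the sum into one over `q`-tuples of naturals with
`∑ mᵢ = M := 2g - q - 2`. Since `a ^ a * b ^ b ≤ (a + b) ^ (a + b) * 2 ^ (-min a b)`, the
two-term sum `∑_{a+b=M} a ^ a * b ^ b` is at most `4 * M ^ M`, and splitting off the first
coordinate gives `4 ^ (q-1) * M ^ M` for `q`-tuples. Finally `M + (q - 1) = 2g - 3` and
`M, g ≤ 2g - 3` (as `q ≤ 2K` forces `g ≥ 3`), so `M ^ M * g ^ (q-1) ≤ (2g-3) ^ (2g-3)`.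
-/

open Finset

theorem Finset.Nat.sum_antidiagonalTuple_succ {M : Type*} [AddCommMonoid M] (k n : ℕ)
    (f : (Fin (k + 1) → ℕ) → M) :
    ∑ x ∈ Nat.antidiagonalTuple (k + 1) n, f x =
      ∑ p ∈ antidiagonal n, ∑ x ∈ Nat.antidiagonalTuple k p.2, f (Fin.cons p.1 x) := by
  have hval : (Nat.antidiagonalTuple (k + 1) n).val =
      (antidiagonal n).val.bind fun p => (Nat.antidiagonalTuple k p.2).val.map (Fin.cons p.1) := by
    simp only [Nat.antidiagonalTuple, Multiset.Nat.antidiagonalTuple, List.Nat.antidiagonalTuple]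
    rw [← Multiset.coe_bind]
    rfl
  simp only [sum_eq_multiset_sum, hval, Multiset.map_bind, Multiset.sum_bind, Multiset.map_map]
  rfl

lemma pow_self_mul_pow_self_le (a b : ℕ) :
    (a : ℝ) ^ a * (b : ℝ) ^ b ≤ ((a + b : ℕ) : ℝ) ^ (a + b) * ((1 / 2) ^ a + (1 / 2) ^ b) := by
  wlog hab : a ≤ b generalizing a b
  · simpa only [mul_comm, add_comm] using this b a (by omega)
  -- the smaller base `a` is at most half of `a + b`
  have hab' : (a : ℝ) ≤ b := by exact_mod_cast hab
  calc (a : ℝ) ^ a * (b : ℝ) ^ b ≤ ((a + b : ℕ) / 2 : ℝ) ^ a * ((a + b : ℕ) : ℝ) ^ b := by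
        push_cast
        gcongr <;> linarith [(a.cast_nonneg : (0 : ℝ) ≤ a)]
    _ = ((a + b : ℕ) : ℝ) ^ (a + b) * (1 / 2) ^ a := by
        simp only [div_pow, one_div, inv_pow, pow_add]; ring
    _ ≤ _ := by gcongr; exact le_add_of_nonneg_right (by positivity)

lemma sum_antidiagonal_pow_self_mul_pow_self_le (M : ℕ) :
    ∑ p ∈ antidiagonal M, (p.1 : ℝ) ^ p.1 * (p.2 : ℝ) ^ p.2 ≤ 4 * (M : ℝ) ^ M := by
  have geom : ∑ p ∈ antidiagonal M, (1 / 2 : ℝ) ^ p.1 ≤ 2 := by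
    rw [Nat.sum_antidiagonal_eq_sum_range_succ_mk]
    exact sum_geometric_two_le _
  have geom_swap : ∑ p ∈ antidiagonal M, (1 / 2 : ℝ) ^ p.2 ≤ 2 := by
    rwa [← Nat.sum_antidiagonal_swap] at geom
  calc ∑ p ∈ antidiagonal M, (p.1 : ℝ) ^ p.1 * (p.2 : ℝ) ^ p.2
      ≤ ∑ p ∈ antidiagonal M, (M : ℝ) ^ M * ((1 / 2) ^ p.1 + (1 / 2) ^ p.2) := by
        refine sum_le_sum fun p hp => ?_
        rw [← mem_antidiagonal.mp hp]
        exact pow_self_mul_pow_self_le p.1 p.2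
    _ ≤ (M : ℝ) ^ M * (2 + 2) := by
        rw [← mul_sum, sum_add_distrib]
        gcongr
    _ = 4 * (M : ℝ) ^ M := by ring

lemma sum_antidiagonalTuple_prod_pow_self_le (k M : ℕ) :
    ∑ x ∈ Nat.antidiagonalTuple (k + 1) M, ∏ i, (x i : ℝ) ^ x i ≤ 4 ^ k * (M : ℝ) ^ M := by
  induction k generalizing M with
  | zero => simp [Nat.antidiagonalTuple_one]
  | succ k ih =>
    rw [Nat.sum_antidiagonalTuple_succ]
    calc ∑ p ∈ antidiagonal M, ∑ x ∈ Nat.antidiagonalTuple (k + 1) p.2,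
          ∏ i, ((Fin.cons p.1 x : Fin (k + 2) → ℕ) i : ℝ) ^ (Fin.cons p.1 x : Fin (k + 2) → ℕ) i
        = ∑ p ∈ antidiagonal M, (p.1 : ℝ) ^ p.1 *
            ∑ x ∈ Nat.antidiagonalTuple (k + 1) p.2, ∏ i, (x i : ℝ) ^ x i := by
          simp only [Fin.prod_univ_succ, Fin.cons_zero, Fin.cons_succ, mul_sum]
      _ ≤ ∑ p ∈ antidiagonal M, 4 ^ k * ((p.1 : ℝ) ^ p.1 * (p.2 : ℝ) ^ p.2) := by
          refine sum_le_sum fun p _ => ?_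
          calc (p.1 : ℝ) ^ p.1 * ∑ x ∈ Nat.antidiagonalTuple (k + 1) p.2, ∏ i, (x i : ℝ) ^ x i
              ≤ (p.1 : ℝ) ^ p.1 * (4 ^ k * (p.2 : ℝ) ^ p.2) := by gcongr; exact ih p.2
            _ = 4 ^ k * ((p.1 : ℝ) ^ p.1 * (p.2 : ℝ) ^ p.2) := by ring
      _ ≤ 4 ^ k * (4 * (M : ℝ) ^ M) := by
          rw [← mul_sum]
          gcongr
          exact sum_antidiagonal_pow_self_mul_pow_self_le M
      _ = 4 ^ (k + 1) * (M : ℝ) ^ M := by ring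

lemma sum_filter_antidiagonalTuple_le {q S : ℕ} (n : Fin q → ℕ) (f : ℕ → ℝ)
    (hf : ∀ m, 0 ≤ f m) :
    ∑ gs ∈ (Nat.antidiagonalTuple q S).filter (fun gs => ∀ i, 3 ≤ 2 * gs i + n i),
        ∏ i, f (2 * gs i + n i - 3) ≤
      ∑ m ∈ Nat.antidiagonalTuple q (2 * S + ∑ i, n i - 3 * q), ∏ i, f (m i) := by
  set shift : (Fin q → ℕ) → Fin q → ℕ := fun gs i => 2 * gs i + n i - 3
  have hinj : Set.InjOn shift
      ((Nat.antidiagonalTuple q S).filter (fun gs => ∀ i, 3 ≤ 2 * gs i + n i)) := by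
    intro gs hgs gs' hgs' h
    have h3 := (mem_filter.mp hgs).2
    have h3' := (mem_filter.mp hgs').2
    funext i
    have hi : 2 * gs i + n i - 3 = 2 * gs' i + n i - 3 := congrFun h i
    have := h3 i
    have := h3' i
    omega
  rw [← sum_image (f := fun m => ∏ i, f (m i)) hinj]
  refine sum_le_sum_of_subset_of_nonneg ?_ fun m _ _ => prod_nonneg fun i _ => hf (m i)
  intro m hm
  obtain ⟨gs, hgs, rfl⟩ := mem_image.mp hm
  obtain ⟨hgs_sum, h3⟩ := mem_filter.mp hgs
  rw [Nat.mem_antidiagonalTuple] at hgs_sum ⊢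
  have hshift : ∑ i, shift gs i + ∑ _i : Fin q, 3 = 2 * ∑ i, gs i + ∑ i, n i := by
    rw [← sum_add_distrib, mul_sum, ← sum_add_distrib]
    exact sum_congr rfl fun i _ => Nat.sub_add_cancel (h3 i)
  simp only [sum_const, card_univ, Fintype.card_fin, smul_eq_mul] at hshift
  omega

lemma pow_self_mul_pow_le {a b c e : ℕ} (ha : a ≤ c) (hb : b ≤ c) :
    (a : ℝ) ^ a * (b : ℝ) ^ e ≤ (c : ℝ) ^ (a + e) := by
  rw [pow_add]
  gcongr

/-- The combinatorial estimate behind `∑ V_{g₁,n₁}⋯V_{g_q,n_q} = O(V_g/g^{q-1})`: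
for `n₁,…,n_q ≥ 1` with `∑ nᵢ = 2K`, there is `C > 0` such that for all `g ≥ K + 2`,
`∑ ∏ᵢ (2gᵢ - 3 + nᵢ)^(2gᵢ - 3 + nᵢ) ≤ C (2g-3)^(2g-3) / g^(q-1)`, the sum being over all
tuples `(g₁,…,g_q) ∈ ℕ^q` with `∑ gᵢ = g + q - K - 1` and `2gᵢ - 3 + nᵢ ≥ 0` for all `i`
(with the convention `0^0 = 1`). -/
theorem sum_products_bound (q K : ℕ) (hq : 1 ≤ q) (n : Fin q → ℕ) (hn : ∀ i, n i ≠ 0)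
    (hsum : ∑ i, n i = 2 * K) :
    ∃ C > (0:ℝ), ∀ g : ℕ, K + 2 ≤ g →
      ∑ gs ∈ (Finset.Nat.antidiagonalTuple q (g + q - K - 1)).filter
          (fun gs => ∀ i, 3 ≤ 2 * gs i + n i),
        (∏ i, ((2 * gs i + n i - 3 : ℕ) : ℝ) ^ (2 * gs i + n i - 3)) ≤
      C * ((2 * g - 3 : ℕ) : ℝ) ^ (2 * g - 3) / (g : ℝ) ^ (q - 1) := by
  obtain ⟨k, rfl⟩ : ∃ k, q = k + 1 := ⟨q - 1, by omega⟩
  have hqK : k + 1 ≤ 2 * K := by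
    simpa [hsum] using card_nsmul_le_sum univ n 1 fun i _ => Nat.one_le_iff_ne_zero.mpr (hn i)
  refine ⟨4 ^ k, by positivity, fun g hg => ?_⟩
  have hM : 2 * (g + (k + 1) - K - 1) + ∑ i, n i - 3 * (k + 1) = 2 * g - k - 3 := by
    rw [hsum]; omega
  have hg_pos : (0 : ℝ) < g := by exact_mod_cast (by omega : 0 < g)
  rw [Nat.add_sub_cancel, le_div_iff₀ (by positivity)]
  calc _ ≤ 4 ^ k * ((2 * g - k - 3 : ℕ) : ℝ) ^ (2 * g - k - 3) * (g : ℝ) ^ k := by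
        gcongr
        grw [sum_filter_antidiagonalTuple_le n (fun m => (m : ℝ) ^ m) fun m => by positivity, hM]
        exact sum_antidiagonalTuple_prod_pow_self_le k _
    _ ≤ 4 ^ k * ((2 * g - 3 : ℕ) : ℝ) ^ (2 * g - 3) := by
        rw [mul_assoc, show 2 * g - 3 = 2 * g - k - 3 + k by omega]
        gcongr
        exact pow_self_mul_pow_le (by omega) (by omega)
end
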